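/- Let w_1 and w_2 be Catalan half-words of length n with the same number j of 1s and the same set of positions of 01-patterns (indices i with x_i = 0, x_{i+1} = 1). For any Catalan half-word w_3 of length n with j ones, setting w_b = w_1·w_3^{-1} and w_c = w_2·w_3^{-1}, one has maj(w_b) − maj(w_b^{-1}) = maj(w_c) − maj(w_c^{-1}). -/

import Mathlib

/-- Reversal with 0/1 exchanged: the "inverse" of a 01-word (here `true` = 1, `false` = 0). -/
def inv01 (w : List Bool) : List Bool := w.reverse.map (fun b => !b)

/-- Descent set of a 01-word, as 0-based indices `i` (the 1-based position is `i+1`)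
with `x_{i+1} = 1` and `x_{i+2} = 0`. -/
def desSet (w : List Bool) : Finset ℕ :=
  (Finset.range (w.length - 1)).filter
    (fun i => w.getD i false = true ∧ w.getD (i + 1) false = false)

/-- Major index of a 01-word: sum of the (1-based) positions of descents. -/
def maj (w : List Bool) : ℕ := ∑ i ∈ desSet w, (i + 1)

/-- No initial segment has more 1s than 0s. -/
def IsHalfWord (w : List Bool) : Prop :=
  ∀ m : ℕ, (w.take m).count true ≤ (w.take m).count false

/-!
Since `maj (w⁻¹) = |w| · des w - maj w`, the quantity `maj w - maj (w⁻¹)` equals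
`2 (maj w - (|w|/2) · des w)`. For `w = a·t` with `|a| = |t| = n`, the descent at the junction
has weight `n - n = 0` in `maj - n · des`, so this is `2 (maj a - n · des a + maj t)`. Finally,
`x_{i+1} - x_i` is `1` at a `01`-pattern and `-1` at a descent, so for a word starting with `0`
summation by parts gives `∑_{01-patterns} (n - 1 - i) - ∑_{descents} (n - 1 - i) = #1s`; hence
`maj a - n · des a` is determined by `n`, the number of `1`s and the set of `01`-patterns of `a`.
-/

theorem length_inv01 (w : List Bool) : (inv01 w).length = w.length := by
  simp [inv01]

theorem getD_inv01 (w : List Bool) {i : ℕ} (h : i < w.length) :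
    (inv01 w).getD i false = !w.getD (w.length - 1 - i) false := by
  rw [List.getD_eq_getElem _ _ (by rwa [length_inv01]), List.getD_eq_getElem _ _ (by omega)]
  simp [inv01, List.getElem_reverse]

theorem lt_length_of_mem_desSet {w : List Bool} {m : ℕ} (hm : m ∈ desSet w) :
    m + 1 < w.length := by
  have := (Finset.mem_filter.mp hm).1
  rw [Finset.mem_range] at this
  omega

theorem mem_desSet_inv01 {w : List Bool} {i : ℕ} :
    i ∈ desSet (inv01 w) ↔ i + 1 < w.length ∧ w.length - 2 - i ∈ desSet w := by
  simp only [desSet, Finset.mem_filter, Finset.mem_range, length_inv01]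
  constructor
  · rintro ⟨hi, h₁, h₂⟩
    rw [getD_inv01 w (by omega)] at h₁ h₂
    refine ⟨by omega, by omega, ?_, ?_⟩
    · simpa [show w.length - 1 - (i + 1) = w.length - 2 - i by omega] using h₂
    · simpa [show w.length - 2 - i + 1 = w.length - 1 - i by omega] using h₁
  · rintro ⟨hi, -, h₁, h₂⟩
    rw [getD_inv01 w (by omega), getD_inv01 w (by omega),
      show w.length - 1 - i = w.length - 2 - i + 1 by omega,
      show w.length - 1 - (i + 1) = w.length - 2 - i by omega, h₁, h₂]
    exact ⟨by omega, rfl, rfl⟩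

theorem maj_add_maj_inv01 (w : List Bool) :
    maj w + maj (inv01 w) = w.length * (desSet w).card := by
  have hinv : maj (inv01 w) = ∑ m ∈ desSet w, (w.length - 1 - m) := by
    refine Finset.sum_nbij' (fun i ↦ w.length - 2 - i) (fun i ↦ w.length - 2 - i) ?_ ?_ ?_ ?_ ?_
    · exact fun i hi ↦ (mem_desSet_inv01.mp hi).2
    · intro m hm
      have := lt_length_of_mem_desSet hm
      refine mem_desSet_inv01.mpr ⟨by omega, ?_⟩
      rwa [show w.length - 2 - (w.length - 2 - m) = m by omega]
    · intro i hi
      have := (mem_desSet_inv01.mp hi).1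
      omega
    · intro m hm
      have := lt_length_of_mem_desSet hm
      omega
    · intro i hi
      have := (mem_desSet_inv01.mp hi).1
      omega
  rw [hinv, maj, ← Finset.sum_add_distrib, Finset.card_eq_sum_ones, Finset.mul_sum]
  exact Finset.sum_congr rfl fun m hm ↦ by have := lt_length_of_mem_desSet hm; omega

theorem maj_sub_mul_card_desSet (w : List Bool) (c : ℤ) :
    (maj w : ℤ) - c * (desSet w).card = ∑ i ∈ desSet w, ((i : ℤ) + 1 - c) := by
  simp [maj, Finset.sum_sub_distrib, mul_comm]

def patternSet (p q : Bool) (w : List Bool) : Finset ℕ :=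
  (Finset.range (w.length - 1)).filter (fun i => w.getD i false = p ∧ w.getD (i + 1) false = q)

theorem desSet_eq_patternSet : desSet = patternSet true false := rfl

def ascSet (w : List Bool) : Finset ℕ := patternSet false true w

-- `v.head?` rather than `v.getD 0 false`, which would read a phantom `false` when `v = []`.
theorem sum_patternSet_cons {M : Type*} [AddCommMonoid M] (p q b : Bool) (v : List Bool)
    (f : ℕ → M) :
    ∑ i ∈ patternSet p q (b :: v), f i =
      (if b = p ∧ v.head? = some q then f 0 else 0) + ∑ i ∈ patternSet p q v, f (i + 1) := by
  rcases v with _ | ⟨c, v⟩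
  · simp [patternSet]
  · simp only [patternSet, Finset.sum_filter, List.length_cons, Nat.add_sub_cancel,
      Finset.sum_range_succ', List.getD_cons_succ, List.getD_cons_zero, List.head?_cons,
      Option.some.injEq]
    rw [add_comm]

theorem sum_desSet_append_shift (a t : List Bool) :
    ∑ i ∈ desSet (a ++ t), ((i : ℤ) + 1 - a.length) =
      ∑ i ∈ desSet a, ((i : ℤ) + 1 - a.length) + maj t := by
  induction a with
  | nil => simp [maj, desSet]
  | cons b a ih =>
    have hshift : ∀ s : Finset ℕ, ∑ i ∈ s, (((i + 1 : ℕ) : ℤ) + 1 - (a.length + 1 : ℕ)) =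
        ∑ i ∈ s, ((i : ℤ) + 1 - a.length) := fun s ↦
      Finset.sum_congr rfl fun i _ ↦ by push_cast; ring
    rw [List.cons_append, desSet_eq_patternSet, sum_patternSet_cons, sum_patternSet_cons,
      List.length_cons, hshift, hshift, ← desSet_eq_patternSet, ih]
    rcases eq_or_ne a [] with rfl | ha
    · simp
    · rw [List.head?_append_of_ne_nil a ha]
      ring

theorem maj_append_sub_maj_inv01 (a t : List Bool) (h : a.length = t.length) :
    (maj (a ++ t) : ℤ) - maj (inv01 (a ++ t)) =
      2 * ((maj a : ℤ) - a.length * (desSet a).card + maj t) := by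
  have hsum :
      (maj (a ++ t) : ℤ) + maj (inv01 (a ++ t)) = 2 * a.length * (desSet (a ++ t)).card := by
    have := maj_add_maj_inv01 (a ++ t)
    rw [List.length_append, ← h, ← two_mul] at this
    exact_mod_cast this
  rw [maj_sub_mul_card_desSet, ← sum_desSet_append_shift, ← maj_sub_mul_card_desSet]
  linarith

theorem sum_ascSet_sub_sum_desSet (w : List Bool) :
    ∑ i ∈ ascSet w, ((w.length : ℤ) - 1 - i) -
        ∑ i ∈ desSet w, ((w.length : ℤ) - 1 - i) =
      w.count true - if w.head? = some true then (w.length : ℤ) else 0 := by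
  induction w with
  | nil => simp [ascSet, desSet, patternSet]
  | cons b v ih =>
    have hshift : ∀ s : Finset ℕ, ∑ i ∈ s, (((v.length + 1 : ℕ) : ℤ) - 1 - (i + 1 : ℕ)) =
        ∑ i ∈ s, ((v.length : ℤ) - 1 - i) := fun s ↦
      Finset.sum_congr rfl fun i _ ↦ by push_cast; ring
    simp only [ascSet, desSet_eq_patternSet] at ih ⊢
    rw [sum_patternSet_cons, sum_patternSet_cons, List.length_cons, hshift, hshift,
      List.count_cons, List.head?_cons]
    cases b <;> rcases v with _ | ⟨_ | _, v⟩ <;>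
      simp at ih ⊢ <;> linarith

theorem IsHalfWord.head?_ne_some_true {w : List Bool} (hw : IsHalfWord w) :
    w.head? ≠ some true := by
  intro h
  obtain ⟨v, rfl⟩ : ∃ v, w = true :: v := by
    rcases w with _ | ⟨b, v⟩ <;> simp_all
  simpa using hw 1

theorem IsHalfWord.maj_sub_length_mul_card_desSet {w : List Bool} (hw : IsHalfWord w) :
    (maj w : ℤ) - w.length * (desSet w).card =
      w.count true - ∑ i ∈ ascSet w, ((w.length : ℤ) - 1 - i) := by
  have key := sum_ascSet_sub_sum_desSet w
  rw [if_neg hw.head?_ne_some_true] at key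
  have hdes : ∑ i ∈ desSet w, ((w.length : ℤ) - 1 - i) =
      -∑ i ∈ desSet w, ((i : ℤ) + 1 - w.length) := by
    rw [← Finset.sum_neg_distrib]
    exact Finset.sum_congr rfl fun i _ ↦ by ring
  rw [maj_sub_mul_card_desSet]
  linarith

theorem maj_diff_eq_of_same_patterns_general (n j : ℕ) (w₁ w₂ w₃ : List Bool)
    (h₁ : w₁.length = n) (h₂ : w₂.length = n) (h₃ : w₃.length = n)
    (hh₁ : IsHalfWord w₁) (hh₂ : IsHalfWord w₂)
    (hc₁ : w₁.count true = j) (hc₂ : w₂.count true = j)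
    (hpat : ∀ m : ℕ, m + 1 < n →
      ((w₁.getD m false = false ∧ w₁.getD (m + 1) false = true) ↔
       (w₂.getD m false = false ∧ w₂.getD (m + 1) false = true))) :
    (maj (w₁ ++ inv01 w₃) : ℤ) - maj (inv01 (w₁ ++ inv01 w₃)) =
      (maj (w₂ ++ inv01 w₃) : ℤ) - maj (inv01 (w₂ ++ inv01 w₃)) := by
  have hasc : ascSet w₁ = ascSet w₂ := by
    ext i
    simp only [ascSet, patternSet, Finset.mem_filter, Finset.mem_range, h₁, h₂]
    exact and_congr_right fun hi ↦ hpat i (by omega)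
  rw [maj_append_sub_maj_inv01 _ _ (by rw [length_inv01, h₁, h₃]),
    maj_append_sub_maj_inv01 _ _ (by rw [length_inv01, h₂, h₃]),
    hh₁.maj_sub_length_mul_card_desSet, hh₂.maj_sub_length_mul_card_desSet,
    hasc, h₁, h₂, hc₁, hc₂]

/-- If w₁, w₂ are Catalan half-words of length n with j ones and the same positions of
01-patterns, then for any Catalan half-word w₃ of length n with j ones, the words
w_b = w₁·w₃⁻¹ and w_c = w₂·w₃⁻¹ satisfy maj(w_b) − maj(w_b⁻¹) = maj(w_c) − maj(w_c⁻¹). -/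
theorem maj_diff_eq_of_same_patterns (n j : ℕ) (w₁ w₂ w₃ : List Bool)
    (h₁ : w₁.length = n) (h₂ : w₂.length = n) (h₃ : w₃.length = n)
    (hh₁ : IsHalfWord w₁) (hh₂ : IsHalfWord w₂) (hh₃ : IsHalfWord w₃)
    (hc₁ : w₁.count true = j) (hc₂ : w₂.count true = j) (hc₃ : w₃.count true = j)
    (hpat : ∀ m : ℕ, m + 1 < n →
      ((w₁.getD m false = false ∧ w₁.getD (m + 1) false = true) ↔
       (w₂.getD m false = false ∧ w₂.getD (m + 1) false = true))) :
    (maj (w₁ ++ inv01 w₃) : ℤ) - maj (inv01 (w₁ ++ inv01 w₃)) =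
      (maj (w₂ ++ inv01 w₃) : ℤ) - maj (inv01 (w₂ ++ inv01 w₃)) :=
  maj_diff_eq_of_same_patterns_general n j w₁ w₂ w₃ h₁ h₂ h₃ hh₁ hh₂ hc₁ hc₂ hpat
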